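/- arXiv:2511.18198 — 2 statements merged into one kernel-verified Lean document; each statement's English description precedes it below -/
import Mathlib

section
/- For every n ≥ 1 there exists a move sequence that cleanly computes 2^(n−1) − 1 with space at most n and total move count at most 3^(n−1). -/
/-- A move sequence in the reversible pebble game modelling intermediate
uncomputation of iterated out-of-place squarings.  `conf t` is the
configuration (finite set of pebbled nodes) at time `t ≤ T`; at step
`t < T` exactly the node `move t` is toggled, subject to the legality
condition that either `move t = 0` or `move t ≥ 1` and its predecessor
is pebbled. -/
structure MoveSeq where
  /-- total move count -/
  T : ℕ
  /-- configuration at each time step -/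
  conf : ℕ → Finset ℕ
  /-- the node toggled at step `t` (relevant for `t < T`) -/
  move : ℕ → ℕ
  init : conf 0 = ∅
  legal : ∀ t < T, move t = 0 ∨ (1 ≤ move t ∧ move t - 1 ∈ conf t)
  step : ∀ t < T, conf (t + 1) =
    if move t ∈ conf t then (conf t).erase (move t) else insert (move t) (conf t)

/-- The space of a move sequence: the maximum number of pebbled nodes over
all visited configurations. -/
def MoveSeq.space (M : MoveSeq) : ℕ :=
  (Finset.range (M.T + 1)).sup fun t => (M.conf t).card

/-- The number of squaring operations: the number of moves toggling a node `i ≥ 1`. -/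
def MoveSeq.squarings (M : MoveSeq) : ℕ :=
  ((Finset.range M.T).filter fun t => 1 ≤ M.move t).card

/-- The sequence cleanly computes `m` if its final configuration is `{m}`. -/
def MoveSeq.CleanlyComputes (M : MoveSeq) (m : ℕ) : Prop :=
  M.conf M.T = {m}

/-- Some configuration visited by the sequence contains the node `i`. -/
def MoveSeq.Visits (M : MoveSeq) (i : ℕ) : Prop :=
  ∃ t ≤ M.T, i ∈ M.conf t


namespace PebbleAux

def toggle (s : Finset ℕ) (i : ℕ) : Finset ℕ := if i ∈ s then s.erase i else insert i s

def Ok (s : Finset ℕ) (i : ℕ) : Prop := i = 0 ∨ (1 ≤ i ∧ i - 1 ∈ s)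

def play : Finset ℕ → List ℕ → Finset ℕ
  | s, [] => s
  | s, i :: l => play (toggle s i) l

def LegalFrom : Finset ℕ → List ℕ → Prop
  | _, [] => True
  | s, i :: l => Ok s i ∧ LegalFrom (toggle s i) l

def spaceFrom : Finset ℕ → List ℕ → ℕ
  | s, [] => s.card
  | s, i :: l => max s.card (spaceFrom (toggle s i) l)

lemma toggle_toggle (s : Finset ℕ) (i : ℕ) : toggle (toggle s i) i = s := by
  unfold toggle
  by_cases h : i ∈ s
  · simp [h, Finset.insert_erase h]
  · simp [h]

lemma toggle_insert {a i : ℕ} (h : i ≠ a) (s : Finset ℕ) :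
    toggle (insert a s) i = insert a (toggle s i) := by
  unfold toggle
  by_cases hi : i ∈ s
  · simp [hi, Finset.mem_insert, h, Finset.erase_insert_of_ne (Ne.symm h)]
  · have : i ∉ insert a s := by simp [Finset.mem_insert, h, hi]
    simp [hi, this, Finset.insert_comm]

lemma ok_toggle {s : Finset ℕ} {i : ℕ} (h : Ok s i) : Ok (toggle s i) i := by
  rcases h with h | ⟨h1, h2⟩
  · exact Or.inl h
  · refine Or.inr ⟨h1, ?_⟩
    have hne : i - 1 ≠ i := by omega
    unfold toggle
    by_cases hi : i ∈ s
    · simp [hi, Finset.mem_erase, hne, h2]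
    · simp [hi, Finset.mem_insert, h2]

lemma ok_insert {s : Finset ℕ} {i a : ℕ} (h : Ok s i) : Ok (insert a s) i := by
  rcases h with h | ⟨h1, h2⟩
  · exact Or.inl h
  · exact Or.inr ⟨h1, Finset.mem_insert_of_mem h2⟩

lemma play_append (s : Finset ℕ) (l1 l2 : List ℕ) :
    play s (l1 ++ l2) = play (play s l1) l2 := by
  induction l1 generalizing s with
  | nil => rfl
  | cons i l ih => simp [play, ih]

lemma play_reverse (s : Finset ℕ) (l : List ℕ) : play (play s l) l.reverse = s := by
  induction l generalizing s with
  | nil => rfl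
  | cons i l ih =>
    simp only [play, List.reverse_cons, play_append, ih]
    simp [play, toggle_toggle]

lemma legalFrom_append {s : Finset ℕ} {l1 l2 : List ℕ} :
    LegalFrom s (l1 ++ l2) ↔ LegalFrom s l1 ∧ LegalFrom (play s l1) l2 := by
  induction l1 generalizing s with
  | nil => simp [LegalFrom, play]
  | cons i l ih => simp [LegalFrom, play, ih, and_assoc]

lemma legalFrom_reverse {s : Finset ℕ} {l : List ℕ} (h : LegalFrom s l) :
    LegalFrom (play s l) l.reverse := by
  induction l generalizing s with
  | nil => trivial
  | cons i l ih =>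
    obtain ⟨h1, h2⟩ := h
    simp only [play, List.reverse_cons]
    rw [legalFrom_append]
    refine ⟨ih h2, ?_⟩
    rw [play_reverse]
    exact ⟨ok_toggle h1, trivial⟩

lemma play_insert {a : ℕ} {l : List ℕ} (h : a ∉ l) (s : Finset ℕ) :
    play (insert a s) l = insert a (play s l) := by
  induction l generalizing s with
  | nil => rfl
  | cons i l ih =>
    have hia : i ≠ a := fun he => h (he ▸ (List.mem_cons_self : i ∈ i :: l))
    simp only [play, toggle_insert hia]
    exact ih (fun hm => h (List.mem_cons_of_mem _ hm)) _

lemma legalFrom_insert {a : ℕ} {l : List ℕ} (h : a ∉ l) {s : Finset ℕ}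
    (hl : LegalFrom s l) : LegalFrom (insert a s) l := by
  induction l generalizing s with
  | nil => trivial
  | cons i l ih =>
    obtain ⟨h1, h2⟩ := hl
    have hia : i ≠ a := fun he => h (he ▸ (List.mem_cons_self : i ∈ i :: l))
    refine ⟨ok_insert h1, ?_⟩
    rw [toggle_insert hia]
    exact ih (fun hm => h (List.mem_cons_of_mem _ hm)) h2

lemma card_le_spaceFrom (s : Finset ℕ) (l : List ℕ) : s.card ≤ spaceFrom s l := by
  cases l with
  | nil => exact le_refl _
  | cons i l => exact le_max_left _ _

lemma spaceFrom_append (s : Finset ℕ) (l1 l2 : List ℕ) :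
    spaceFrom s (l1 ++ l2) = max (spaceFrom s l1) (spaceFrom (play s l1) l2) := by
  induction l1 generalizing s with
  | nil =>
    simp only [List.nil_append, spaceFrom, play]
    exact (max_eq_right (card_le_spaceFrom s l2)).symm
  | cons i l ih =>
    simp only [List.cons_append, spaceFrom, play, List.append_eq, ih, max_assoc]

lemma spaceFrom_reverse (s : Finset ℕ) (l : List ℕ) :
    spaceFrom (play s l) l.reverse = spaceFrom s l := by
  induction l generalizing s with
  | nil => rfl
  | cons i l ih =>
    simp only [play, List.reverse_cons, spaceFrom]
    rw [spaceFrom_append, ih, play_reverse]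
    have h1 : (toggle s i).card ≤ spaceFrom (toggle s i) l := card_le_spaceFrom _ _
    simp only [spaceFrom, toggle_toggle]
    omega

lemma spaceFrom_insert {a : ℕ} {l : List ℕ} (h : a ∉ l) (s : Finset ℕ) :
    spaceFrom (insert a s) l ≤ spaceFrom s l + 1 := by
  induction l generalizing s with
  | nil => simpa [spaceFrom] using Finset.card_insert_le a s
  | cons i l ih =>
    have hia : i ≠ a := fun he => h (he ▸ (List.mem_cons_self : i ∈ i :: l))
    simp only [spaceFrom, toggle_insert hia]
    have h1 := ih (fun hm => h (List.mem_cons_of_mem _ hm)) (toggle s i)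
    have h2 := Finset.card_insert_le a s
    omega

/-- the walk gadget: from a pebble at `p`, place a pebble at `p + 2^k`. -/
def walk : ℕ → ℕ → List ℕ
  | p, 0 => [p+1]
  | p, k+1 => walk p k ++ walk (p + 2^k) k ++ (walk p k).reverse

lemma walk_length (p k : ℕ) : (walk p k).length = 3 ^ k := by
  induction k generalizing p with
  | zero => rfl
  | succ k ih => simp [walk, ih]; ring

lemma walk_mem {p k i : ℕ} (h : i ∈ walk p k) : p < i ∧ i ≤ p + 2 ^ k := by
  induction k generalizing p with
  | zero => simp [walk] at h; omega
  | succ k ih =>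
    simp only [walk, List.mem_append, List.mem_reverse] at h
    have h2 : (2:ℕ)^(k+1) = 2^k + 2^k := by ring
    rcases h with (h | h) | h
    · have := ih h; omega
    · have := ih h; omega
    · have := ih h; omega

lemma walk_self_mem (p k : ℕ) : p + 2 ^ k ∈ walk p k := by
  induction k generalizing p with
  | zero => simp [walk]
  | succ k ih =>
    simp only [walk, List.mem_append, List.mem_reverse]
    left; right
    have h2 : p + 2^(k+1) = p + 2^k + 2^k := by ring
    rw [h2]; exact ih (p + 2^k)

lemma walk_play {p k : ℕ} {s : Finset ℕ} (hs : ∀ i ∈ walk p k, i ∉ s) :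
    play s (walk p k) = insert (p + 2 ^ k) s := by
  induction k generalizing p s with
  | zero =>
    have : p + 1 ∉ s := hs _ (by simp [walk])
    simp [walk, play, toggle, this]
  | succ k ih =>
    simp only [walk, play_append]
    have hs1 : ∀ i ∈ walk p k, i ∉ s := fun i hi =>
      hs i (by simp [walk, List.mem_append, hi])
    rw [ih hs1]
    have hs2 : ∀ i ∈ walk (p + 2^k) k, i ∉ insert (p + 2^k) s := by
      intro i hi
      have hb := walk_mem hi
      have : i ∉ s := hs i (by simp [walk, List.mem_append, hi])
      simp [Finset.mem_insert, this]
      omega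
    rw [ih hs2]
    have ha : p + 2^k + 2^k ∉ walk p k := by
      intro hm; have := walk_mem hm; omega
    have ha' : p + 2^k + 2^k ∉ (walk p k).reverse := by simpa using ha
    rw [← ih hs1, play_insert ha', play_reverse]
    congr 1; ring

lemma walk_legal {p k : ℕ} {s : Finset ℕ} (hp : p ∈ s) (hs : ∀ i ∈ walk p k, i ∉ s) :
    LegalFrom s (walk p k) := by
  induction k generalizing p s with
  | zero =>
    refine ⟨Or.inr ⟨by omega, by simpa using hp⟩, trivial⟩
  | succ k ih =>
    simp only [walk]
    rw [legalFrom_append, legalFrom_append]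
    have hs1 : ∀ i ∈ walk p k, i ∉ s := fun i hi =>
      hs i (by simp [walk, List.mem_append, hi])
    have hs2 : ∀ i ∈ walk (p + 2^k) k, i ∉ insert (p + 2^k) s := by
      intro i hi
      have hb := walk_mem hi
      have : i ∉ s := hs i (by simp [walk, List.mem_append, hi])
      simp [Finset.mem_insert, this]; omega
    have hL1 : LegalFrom s (walk p k) := ih hp hs1
    refine ⟨⟨hL1, ?_⟩, ?_⟩
    · rw [walk_play hs1]
      exact ih (Finset.mem_insert_self _ _) hs2
    · rw [play_append, walk_play hs1, walk_play hs2]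
      have ha : p + 2^k + 2^k ∉ (walk p k).reverse := by
        simp only [List.mem_reverse]
        intro hm; have := walk_mem hm; omega
      have := legalFrom_reverse hL1
      rw [walk_play hs1] at this
      exact legalFrom_insert ha this

lemma walk_space {p k : ℕ} {s : Finset ℕ} (hs : ∀ i ∈ walk p k, i ∉ s) :
    spaceFrom s (walk p k) ≤ s.card + (k + 1) := by
  induction k generalizing p s with
  | zero =>
    have h1 : p + 1 ∉ s := hs _ (by simp [walk])
    simp [walk, spaceFrom, toggle, h1, Finset.card_insert_of_notMem h1]
  | succ k ih =>
    simp only [walk]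
    rw [spaceFrom_append, spaceFrom_append, play_append]
    have hs1 : ∀ i ∈ walk p k, i ∉ s := fun i hi =>
      hs i (by simp [walk, List.mem_append, hi])
    have hs2 : ∀ i ∈ walk (p + 2^k) k, i ∉ insert (p + 2^k) s := by
      intro i hi
      have hb := walk_mem hi
      have : i ∉ s := hs i (by simp [walk, List.mem_append, hi])
      simp [Finset.mem_insert, this]; omega
    have hcard1 : (insert (p + 2^k) s).card = s.card + 1 :=
      Finset.card_insert_of_notMem (hs _ (by
        simp [walk, List.mem_append]; left; exact walk_self_mem p k))
    have e1 : play s (walk p k) = insert (p + 2^k) s := walk_play hs1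
    have e2 : play (insert (p + 2^k) s) (walk (p + 2^k) k)
        = insert (p + 2^k + 2^k) (insert (p + 2^k) s) := walk_play hs2
    rw [e1, e2]
    have b1 : spaceFrom s (walk p k) ≤ s.card + (k + 1) := ih hs1
    have b2 : spaceFrom (insert (p + 2^k) s) (walk (p + 2^k) k)
        ≤ s.card + 1 + (k + 1) := by
      have := ih hs2; omega
    have ha : p + 2^k + 2^k ∉ (walk p k).reverse := by
      simp only [List.mem_reverse]
      intro hm; have := walk_mem hm; omega
    have b3 : spaceFrom (insert (p + 2^k + 2^k) (insert (p + 2^k) s)) (walk p k).reverse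
        ≤ s.card + 1 + (k + 1) := by
      have h4 := spaceFrom_insert ha (insert (p + 2^k) s)
      have h5 : spaceFrom (insert (p + 2^k) s) (walk p k).reverse = spaceFrom s (walk p k) := by
        rw [← e1, spaceFrom_reverse]
      omega
    omega

/-- the full binary-recursion strategy reaching node `2^k - 1`. -/
def strat : ℕ → List ℕ
  | 0 => [0]
  | k+1 => strat k ++ walk (2^k - 1) k ++ (strat k).reverse

lemma strat_length (k : ℕ) : (strat k).length = 3 ^ k := by
  induction k with
  | zero => rfl
  | succ k ih => simp [strat, ih, walk_length]; ring

lemma strat_mem {k i : ℕ} (h : i ∈ strat k) : i < 2 ^ k := by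
  induction k with
  | zero => simp [strat] at h; omega
  | succ k ih =>
    have h1 : (1:ℕ) ≤ 2 ^ k := Nat.one_le_two_pow
    have h2 : (2:ℕ)^(k+1) = 2^k + 2^k := by ring
    simp only [strat, List.mem_append, List.mem_reverse] at h
    rcases h with (h | h) | h
    · have := ih h; omega
    · have := walk_mem h; omega
    · have := ih h; omega

lemma strat_play (k : ℕ) : play ∅ (strat k) = {2 ^ k - 1} := by
  induction k with
  | zero => simp [strat, play, toggle]
  | succ k ih =>
    have h1 : (1:ℕ) ≤ 2 ^ k := Nat.one_le_two_pow
    simp only [strat, play_append, ih]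
    have hs2 : ∀ i ∈ walk (2^k - 1) k, i ∉ ({2^k - 1} : Finset ℕ) := by
      intro i hi
      have := walk_mem hi
      simp only [Finset.mem_singleton]; omega
    rw [walk_play hs2]
    have ha : 2^k - 1 + 2^k ∉ (strat k).reverse := by
      simp only [List.mem_reverse]
      intro hm; have := strat_mem hm; omega
    have e : ({2^k - 1} : Finset ℕ) = play ∅ (strat k) := ih.symm
    rw [e, play_insert ha, play_reverse]
    have : 2^k - 1 + 2^k = 2^(k+1) - 1 := by
      have : (2:ℕ)^(k+1) = 2^k + 2^k := by ring
      omega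
    rw [this]; rfl

lemma strat_legal (k : ℕ) : LegalFrom ∅ (strat k) := by
  induction k with
  | zero => exact ⟨Or.inl rfl, trivial⟩
  | succ k ih =>
    have h1 : (1:ℕ) ≤ 2 ^ k := Nat.one_le_two_pow
    simp only [strat]
    rw [legalFrom_append, legalFrom_append, strat_play]
    have hs2 : ∀ i ∈ walk (2^k - 1) k, i ∉ ({2^k - 1} : Finset ℕ) := by
      intro i hi
      have := walk_mem hi
      simp only [Finset.mem_singleton]; omega
    refine ⟨⟨ih, walk_legal (Finset.mem_singleton_self _) hs2⟩, ?_⟩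
    rw [play_append, strat_play, walk_play hs2]
    have ha : 2^k - 1 + 2^k ∉ (strat k).reverse := by
      simp only [List.mem_reverse]
      intro hm; have := strat_mem hm; omega
    have := legalFrom_reverse ih
    rw [strat_play] at this
    exact legalFrom_insert ha this

lemma strat_space (k : ℕ) : spaceFrom ∅ (strat k) ≤ k + 1 := by
  induction k with
  | zero => simp [strat, spaceFrom, toggle]
  | succ k ih =>
    have h1 : (1:ℕ) ≤ 2 ^ k := Nat.one_le_two_pow
    simp only [strat]
    rw [spaceFrom_append, spaceFrom_append, play_append, strat_play]
    have hs2 : ∀ i ∈ walk (2^k - 1) k, i ∉ ({2^k - 1} : Finset ℕ) := by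
      intro i hi
      have := walk_mem hi
      simp only [Finset.mem_singleton]; omega
    have b2 : spaceFrom ({2^k - 1} : Finset ℕ) (walk (2^k - 1) k) ≤ 1 + (k + 1) := by
      have := walk_space hs2
      simpa using this
    rw [walk_play hs2]
    have ha : 2^k - 1 + 2^k ∉ (strat k).reverse := by
      simp only [List.mem_reverse]
      intro hm; have := strat_mem hm; omega
    have b3 : spaceFrom (insert (2^k - 1 + 2^k) ({2^k - 1} : Finset ℕ)) (strat k).reverse
        ≤ k + 2 := by
      have h4 := spaceFrom_insert ha ({2^k - 1} : Finset ℕ)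
      have h5 : spaceFrom ({2^k - 1} : Finset ℕ) (strat k).reverse = spaceFrom ∅ (strat k) := by
        rw [← strat_play, spaceFrom_reverse]
      omega
    omega

lemma legalFrom_getD {s : Finset ℕ} {l : List ℕ} (h : LegalFrom s l) :
    ∀ t < l.length, Ok (play s (l.take t)) (l.getD t 0) := by
  induction l generalizing s with
  | nil => intro t ht; simp at ht
  | cons i l ih =>
    intro t ht
    cases t with
    | zero => exact h.1
    | succ t =>
      simp only [List.take_succ_cons, List.getD_cons_succ, play]
      exact ih h.2 t (by simpa using ht)

lemma play_take_succ {s : Finset ℕ} {l : List ℕ} :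
    ∀ t < l.length, play s (l.take (t + 1)) = toggle (play s (l.take t)) (l.getD t 0) := by
  induction l generalizing s with
  | nil => intro t ht; simp at ht
  | cons i l ih =>
    intro t ht
    cases t with
    | zero => simp [play]
    | succ t =>
      simp only [List.take_succ_cons, List.getD_cons_succ, play]
      exact ih t (by simpa using ht)

lemma card_play_take_le (s : Finset ℕ) (l : List ℕ) (t : ℕ) :
    (play s (l.take t)).card ≤ spaceFrom s l := by
  induction l generalizing s t with
  | nil => simpa [play] using card_le_spaceFrom s []
  | cons i l ih =>
    cases t with
    | zero => exact le_max_left _ _ |>.trans' (le_of_eq rfl)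
    | succ t =>
      simp only [List.take_succ_cons, play, spaceFrom]
      exact (ih _ _).trans (le_max_right _ _)

end PebbleAux

/-- the binary recursion strategy cleanly computes `2^(n-1) - 1`
with space at most `n` and move count at most `3^(n-1)`. -/
theorem binary_recursion_time (n : ℕ) (hn : 1 ≤ n) :
    ∃ M : MoveSeq, M.CleanlyComputes (2 ^ (n - 1) - 1) ∧
      M.space ≤ n ∧ M.T ≤ 3 ^ (n - 1) := by
  set k := n - 1 with hk
  set l := PebbleAux.strat k with hl
  refine ⟨{ T := l.length
            conf := fun t => PebbleAux.play ∅ (l.take t)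
            move := fun t => l.getD t 0
            init := by simp [PebbleAux.play]
            legal := fun t ht => PebbleAux.legalFrom_getD (PebbleAux.strat_legal k) t ht
            step := fun t ht => by
              rw [PebbleAux.play_take_succ t ht]
              rfl }, ?_, ?_, ?_⟩
  · show PebbleAux.play ∅ (l.take l.length) = _
    rw [List.take_length, hl, PebbleAux.strat_play]
  · refine Finset.sup_le fun t _ => ?_
    calc (PebbleAux.play ∅ (l.take t)).card ≤ PebbleAux.spaceFrom ∅ l :=
          PebbleAux.card_play_take_le ∅ l t
      _ ≤ k + 1 := PebbleAux.strat_space k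
      _ ≤ n := by omega
  · show l.length ≤ 3 ^ (n - 1)
    rw [hl, PebbleAux.strat_length]
end

section
/- For all ℓ ≥ 1 and k ≥ 2, setting m = k^ℓ − 1, there exists a move sequence that cleanly computes m with space at most 1 + (k−1)·ℓ and total move count at most 2^ℓ·(m + 1). -/
def toggle (S : Finset ℕ) (i : ℕ) : Finset ℕ :=
  if i ∈ S then S.erase i else insert i S

def run (S : Finset ℕ) (L : List ℕ) : Finset ℕ := L.foldl toggle S

@[simp] lemma run_nil (S : Finset ℕ) : run S [] = S := rfl
lemma run_cons (S : Finset ℕ) (a : ℕ) (L : List ℕ) : run S (a :: L) = run (toggle S a) L := rfl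
lemma run_append (S : Finset ℕ) (L M : List ℕ) : run S (L ++ M) = run (run S L) M :=
  List.foldl_append

lemma toggle_toggle (S : Finset ℕ) (i : ℕ) : toggle (toggle S i) i = S := by
  by_cases h : i ∈ S
  · simp [toggle, h, Finset.insert_erase]
  · simp [toggle, h, Finset.erase_insert]

lemma mem_toggle_of_ne {a i : ℕ} (S : Finset ℕ) (h : a ≠ i) : a ∈ toggle S i ↔ a ∈ S := by
  unfold toggle; split <;> simp [h]

lemma run_reverse (L : List ℕ) : ∀ S, run (run S L) L.reverse = S := by
  induction L with
  | nil => intro S; simp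
  | cons a M ih =>
      intro S
      rw [run_cons, List.reverse_cons, run_append, ih, show run (toggle S a) [a]
        = toggle (toggle S a) a from rfl, toggle_toggle]

lemma run_take_succ (S : Finset ℕ) (L : List ℕ) {j : ℕ} (h : j < L.length) :
    run S (L.take (j+1)) = toggle (run S (L.take j)) (L.getD j 0) := by
  rw [List.take_succ, List.getElem?_eq_getElem h, run_append,
    List.getD_eq_getElem?_getD, List.getElem?_eq_getElem h]
  rfl

lemma run_reverse_take (L : List ℕ) : ∀ S j,
    run (run S L) (L.reverse.take j) = run S (L.take (L.length - j)) := by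
  induction L with
  | nil => intro S j; simp
  | cons a M ih =>
      intro S j
      rw [List.reverse_cons]
      by_cases hj : j ≤ M.length
      · rw [List.take_append]
        rw [show j - M.reverse.length = 0 by simp; omega]
        rw [List.take_zero, List.append_nil, run_cons, ih]
        have h1 : (a :: M).length - j = (M.length - j) + 1 := by simp; omega
        rw [h1, List.take_succ_cons, run_cons]
      · rw [List.take_of_length_le (by simp; omega)]
        rw [← List.reverse_cons, run_reverse]
        rw [show (a :: M).length - j = 0 by simp; omega, List.take_zero, run_nil]

/-- Legality and space bound for a list of moves run from `S`. -/
def Good (S : Finset ℕ) (L : List ℕ) (r : ℕ) : Prop :=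
  (∀ j < L.length, L.getD j 0 = 0 ∨ (1 ≤ L.getD j 0 ∧ L.getD j 0 - 1 ∈ run S (L.take j))) ∧
  (∀ j, (run S (L.take j)).card ≤ r)

lemma Good.mono {S L r r'} (h : Good S L r) (hr : r ≤ r') : Good S L r' :=
  ⟨h.1, fun j => le_trans (h.2 j) hr⟩

lemma good_nil {S r} (h : S.card ≤ r) : Good S [] r := by
  refine ⟨by simp, fun j => by simpa using h⟩

lemma run_append_take (S : Finset ℕ) (L M : List ℕ) (j : ℕ) :
    run S ((L ++ M).take j) = run (run S (L.take j)) (M.take (j - L.length)) := by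
  rw [List.take_append, run_append]

lemma good_append {S L M r} (h1 : Good S L r) (h2 : Good (run S L) M r) :
    Good S (L ++ M) r := by
  constructor
  · intro j hj
    by_cases hjl : j < L.length
    · have hg : (L ++ M).getD j 0 = L.getD j 0 := by
        rw [List.getD_eq_getElem?_getD, List.getD_eq_getElem?_getD,
          List.getElem?_append_left hjl]
      rw [hg, run_append_take, show j - L.length = 0 by omega, List.take_zero, run_nil]
      exact h1.1 j hjl
    · have hl : L.length ≤ j := by omega
      have hg : (L ++ M).getD j 0 = M.getD (j - L.length) 0 := by
        rw [List.getD_eq_getElem?_getD, List.getD_eq_getElem?_getD,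
          List.getElem?_append_right hl]
      have hjm : j - L.length < M.length := by simp at hj; omega
      rw [hg, run_append_take, List.take_of_length_le hl]
      exact h2.1 _ hjm
  · intro j
    by_cases hjl : j ≤ L.length
    · rw [run_append_take, show j - L.length = 0 by omega, List.take_zero, run_nil]
      exact h1.2 j
    · rw [run_append_take, List.take_of_length_le (by omega)]
      exact h2.2 _

lemma good_reverse {S L r} (h : Good S L r) : Good (run S L) L.reverse r := by
  constructor
  · intro j hj
    rw [List.length_reverse] at hj
    set i := L.length - 1 - j with hi
    have hiL : i < L.length := by omega
    have hg : L.reverse.getD j 0 = L.getD i 0 := by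
      rw [List.getD_eq_getElem?_getD, List.getD_eq_getElem?_getD,
        List.getElem?_eq_getElem (by simpa using hj), List.getElem?_eq_getElem hiL,
        List.getElem_reverse]
    have hpref : run (run S L) (L.reverse.take j) = toggle (run S (L.take i)) (L.getD i 0) := by
      rw [run_reverse_take, show L.length - j = i + 1 by omega, run_take_succ S L hiL]
    rw [hg, hpref]
    rcases h.1 i hiL with h0 | ⟨h1', h2'⟩
    · exact Or.inl h0
    · exact Or.inr ⟨h1', (mem_toggle_of_ne _ (by omega)).2 h2'⟩
  · intro j
    rw [run_reverse_take]
    exact h.2 _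

/-- Forward sweep: `j` shifted copies of the strategy `L`, copy `i` shifted by `s + i*w`. -/
def fwdAux (L : List ℕ) (w s : ℕ) : ℕ → List ℕ
  | 0 => []
  | j+1 => fwdAux L w s j ++ L.map (· + (s + j * w))

/-- The recursive clean-computation strategy of arity `k`. -/
def strat (k : ℕ) : ℕ → List ℕ
  | 0 => [0]
  | n+1 => fwdAux (strat k n) (k^n) 0 k ++ (fwdAux (strat k n) (k^n) 0 (k-1)).reverse

lemma fwdAux_map (L : List ℕ) (w s u : ℕ) :
    ∀ j, (fwdAux L w s j).map (· + u) = fwdAux L w (s + u) j := by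
  intro j
  induction j with
  | zero => rfl
  | succ j ih =>
      rw [fwdAux, fwdAux, List.map_append, ih, List.map_map]
      congr 1
      apply List.map_congr_left
      intro x _
      simp only [Function.comp_apply]
      omega

lemma length_fwdAux (L : List ℕ) (w s : ℕ) : ∀ j, (fwdAux L w s j).length = j * L.length := by
  intro j
  induction j with
  | zero => simp [fwdAux]
  | succ j ih => rw [fwdAux, List.length_append, ih, List.length_map]; ring

lemma length_strat (k : ℕ) (hk : 2 ≤ k) : ∀ n, (strat k n).length ≤ (2*k)^n := by
  intro n
  induction n with
  | zero => simp [strat]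
  | succ n ih =>
      rw [strat, List.length_append, List.length_reverse, length_fwdAux, length_fwdAux]
      have h1 : k * (strat k n).length + (k-1) * (strat k n).length ≤ 2*k*(2*k)^n := by
        have := Nat.mul_le_mul_left k ih
        have := Nat.mul_le_mul_left (k-1) ih
        have h3 : k * (2*k)^n + (k-1)*(2*k)^n ≤ 2*k*(2*k)^n := by
          have : (k + (k-1)) * (2*k)^n ≤ (2*k) * (2*k)^n :=
            Nat.mul_le_mul_right _ (by omega)
          rw [Nat.add_mul] at this
          omega
        omega
      calc k * (strat k n).length + (k-1) * (strat k n).length ≤ 2*k*(2*k)^n := h1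
        _ = (2*k)^(n+1) := by rw [pow_succ]; ring

/-- Endpoints of the first `j` blocks of width `w` starting at `s`. -/
def Eset (s w j : ℕ) : Finset ℕ := (Finset.range j).image fun i => s + (i+1)*w - 1

@[simp] lemma Eset_zero (s w : ℕ) : Eset s w 0 = ∅ := rfl

lemma Eset_succ (s w j : ℕ) : Eset s w (j+1) = insert (s + (j+1)*w - 1) (Eset s w j) := by
  rw [Eset, Finset.range_add_one, Finset.image_insert]; rfl

lemma Eset_card_le (s w j : ℕ) : (Eset s w j).card ≤ j :=
  le_trans Finset.card_image_le (by simp)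

/-- The specification of `strat k n` relative to an arbitrary shift and context. -/
def Spec (k n : ℕ) : Prop :=
  ∀ s S, (s = 0 ∨ s - 1 ∈ S) → (∀ x ∈ S, x < s ∨ s + k^n ≤ x) →
    run S ((strat k n).map (· + s)) = insert (s + k^n - 1) S ∧
    Good S ((strat k n).map (· + s)) (S.card + (1 + (k-1)*n))

lemma fwd_main (k n : ℕ) (hk : 2 ≤ k) (IH : Spec k n) :
    ∀ j, j ≤ k → ∀ s S, (s = 0 ∨ s - 1 ∈ S) →
      (∀ x ∈ S, x < s ∨ s + j * k^n ≤ x) →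
      run S (fwdAux (strat k n) (k^n) s j) = S ∪ Eset s (k^n) j ∧
      Good S (fwdAux (strat k n) (k^n) s j) (S.card + (j + (k-1)*n)) := by
  intro j
  induction j with
  | zero =>
      intro _ s S _ _
      exact ⟨by simp [fwdAux], good_nil (by omega)⟩
  | succ j ihj =>
      intro hjk s S hanc hdisj
      have hw1 : 1 ≤ k^n := Nat.one_le_pow _ _ (by omega)
      have hmul : (j+1) * k^n = j * k^n + k^n := by ring
      have hdisj' : ∀ x ∈ S, x < s ∨ s + j * k^n ≤ x := by
        intro x hx
        rcases hdisj x hx with h | h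
        · exact Or.inl h
        · right; omega
      obtain ⟨hrun, hgood⟩ := ihj (by omega) s S hanc hdisj'
      have hCanc : s + j * k^n = 0 ∨ (s + j * k^n) - 1 ∈ S ∪ Eset s (k^n) j := by
        rcases Nat.eq_zero_or_pos j with hj0 | hj1
        · subst hj0
          simp only [Nat.zero_mul, Nat.add_zero]
          rcases hanc with h | h
          · exact Or.inl h
          · exact Or.inr (Finset.mem_union_left _ h)
        · right
          refine Finset.mem_union_right _ (Finset.mem_image.2 ⟨j-1, Finset.mem_range.2 (by omega), ?_⟩)
          rw [show j - 1 + 1 = j by omega]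
      have hCdisj : ∀ x ∈ S ∪ Eset s (k^n) j,
          x < s + j * k^n ∨ (s + j * k^n) + k^n ≤ x := by
        intro x hx
        rcases Finset.mem_union.1 hx with hxS | hxE
        · rcases hdisj x hxS with h | h
          · left; omega
          · right; omega
        · obtain ⟨i, hi, rfl⟩ := Finset.mem_image.1 hxE
          rw [Finset.mem_range] at hi
          left
          have h1 : (i+1) * k^n ≤ j * k^n := Nat.mul_le_mul_right _ (by omega)
          have h2 : 0 < (i+1) * k^n := Nat.mul_pos (by omega) (by omega)
          omega
      obtain ⟨hrun2, hgood2⟩ := IH (s + j * k^n) (S ∪ Eset s (k^n) j) hCanc hCdisj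
      constructor
      · rw [fwdAux, run_append, hrun, hrun2, Eset_succ, Finset.union_insert]
        congr 1
        omega
      · have hCcard : (S ∪ Eset s (k^n) j).card ≤ S.card + j :=
          le_trans (Finset.card_union_le _ _) (by have := Eset_card_le s (k^n) j; omega)
        rw [fwdAux]
        apply good_append
        · exact hgood.mono (by omega)
        · rw [hrun]
          exact hgood2.mono (by omega)

lemma strat_main (k : ℕ) (hk : 2 ≤ k) : ∀ n, Spec k n := by
  intro n
  induction n with
  | zero =>
      intro s S hanc hdisj
      have hs : strat k 0 = [0] := rfl
      have hmap : (strat k 0).map (· + s) = [s] := by simp [hs]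
      have hns : s ∉ S := by
        intro h
        rcases hdisj s h with h' | h' <;> simp [pow_zero] at h'
      have hrun1 : run S [s] = insert s S := by
        rw [show run S [s] = toggle S s from rfl, toggle, if_neg hns]
      constructor
      · rw [hmap, hrun1]
        simp
      · rw [hmap]
        constructor
        · intro j hj
          simp only [List.length_singleton] at hj
          interval_cases j
          have hg : List.getD [s] 0 0 = s := rfl
          by_cases hs0 : s = 0
          · left; rw [hg]; exact hs0
          · right
            rcases hanc with h | h
            · exact absurd h hs0
            · exact ⟨by rw [hg]; omega, by rw [hg]; simpa using h⟩
        · intro j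
          match j with
          | 0 => simp
          | j+1 =>
              rw [List.take_of_length_le (by simp), hrun1]
              have := Finset.card_insert_le s S
              omega
  | succ n ihn =>
      intro s S hanc hdisj
      have hw1 : 1 ≤ k^n := Nat.one_le_pow _ _ (by omega)
      have hkk : k^(n+1) = k * k^n := by rw [pow_succ]; ring
      have hmap : (strat k (n+1)).map (· + s)
          = fwdAux (strat k n) (k^n) s k ++ (fwdAux (strat k n) (k^n) s (k-1)).reverse := by
        rw [strat, List.map_append, List.map_reverse, fwdAux_map, fwdAux_map, Nat.zero_add]
      have hFdisj : ∀ x ∈ S, x < s ∨ s + k * k^n ≤ x := by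
        intro x hx
        rcases hdisj x hx with h | h
        · exact Or.inl h
        · right; omega
      obtain ⟨hFrun, hFgood⟩ := fwd_main k n hk ihn k le_rfl s S hanc hFdisj
      set C := insert (s + k * k^n - 1) S with hC
      have hCanc : s = 0 ∨ s - 1 ∈ C := by
        rcases hanc with h | h
        · exact Or.inl h
        · exact Or.inr (Finset.mem_insert_of_mem h)
      have hmm : (k-1) * k^n + k^n = k * k^n := by
        have h2 : (k-1) * k^n + 1 * k^n = (k-1+1) * k^n := by rw [← Nat.add_mul]
        rw [one_mul] at h2
        rw [h2, show k - 1 + 1 = k by omega]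
      have hCdisj : ∀ x ∈ C, x < s ∨ s + (k-1) * k^n ≤ x := by
        intro x hx
        rcases Finset.mem_insert.1 hx with rfl | hxS
        · right; omega
        · rcases hdisj x hxS with h | h
          · exact Or.inl h
          · right; omega
      obtain ⟨hBrun, hBgood⟩ := fwd_main k n hk ihn (k-1) (by omega) s C hCanc hCdisj
      have hE : Eset s (k^n) k = insert (s + k * k^n - 1) (Eset s (k^n) (k-1)) := by
        have e1 := Eset_succ s (k^n) (k-1)
        rw [show k - 1 + 1 = k by omega] at e1
        exact e1
      have hkey : C ∪ Eset s (k^n) (k-1) = S ∪ Eset s (k^n) k := by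
        rw [hC, Finset.insert_union, hE, Finset.union_insert]
      constructor
      · rw [hmap, run_append, hFrun, ← hkey, ← hBrun, run_reverse, hC]
        congr 1
        omega
      · rw [hmap]
        have hmul : (k-1) * (n+1) = (k-1) * n + (k-1) := by ring
        apply good_append
        · exact hFgood.mono (by omega)
        · rw [hFrun, ← hkey, ← hBrun]
          refine (good_reverse hBgood).mono ?_
          have hCcard : C.card ≤ S.card + 1 := Finset.card_insert_le _ _
          omega


/-- variable-arity recursion: for `m = k^ℓ - 1`, clean computation
with space at most `1 + (k-1)·ℓ` and move count at most `2^ℓ·(m+1)`. -/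
theorem variable_arity_recursion (ℓ k : ℕ) (hℓ : 1 ≤ ℓ) (hk : 2 ≤ k) :
    ∃ M : MoveSeq, M.CleanlyComputes (k ^ ℓ - 1) ∧
      M.space ≤ 1 + (k - 1) * ℓ ∧ M.T ≤ 2 ^ ℓ * (k ^ ℓ - 1 + 1) := by
  have hspec := strat_main k hk ℓ 0 ∅ (Or.inl rfl) (by simp)
  set L : List ℕ := (strat k ℓ).map (· + 0) with hL
  obtain ⟨hrun, hgood⟩ := hspec
  refine ⟨⟨L.length, fun t => run ∅ (L.take t), fun t => L.getD t 0, by simp,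
    fun t ht => hgood.1 t ht, fun t ht => ?_⟩, ?_, ?_, ?_⟩
  · show run ∅ (L.take (t+1)) = _
    rw [run_take_succ ∅ L ht]
    rfl
  · show run ∅ (L.take L.length) = _
    rw [List.take_length, hrun]
    simp
  · refine Finset.sup_le fun t _ => ?_
    have := hgood.2 t
    simpa using this
  · show L.length ≤ _
    have h1 : L.length = (strat k ℓ).length := by rw [hL, List.length_map]
    have h2 := length_strat k hk ℓ
    have h3 : (2*k)^ℓ = 2^ℓ * k^ℓ := by rw [mul_pow]
    have h4 : 1 ≤ k^ℓ := Nat.one_le_pow _ _ (by omega)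
    have h5 : k ^ ℓ - 1 + 1 = k ^ ℓ := by omega
    rw [h5]
    omega
end
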